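/- Let n ≥ 2 be an integer and ε > 0 be fixed. For every real X ≥ 1 and every nonzero integer α with |α| ≤ X, the number of (n+1)-tuples (a₁, …, a_n, c) ∈ ℤ^{n+1} satisfying a₁ ⋯ a_n = c·α^{n−1}, with 0 < |c| ≤ X and 0 < |a_i| ≤ X for each i, is ≪_{n,ε} X^{1+ε}, where the implied constant depends only on n and ε. -/

import Mathlib

open Finset

private lemma prime_factor_bound (δ : ℝ) (hδ : 0 < δ) (p e : ℕ) (hp : 2 ≤ p) :
    (e + 1 : ℝ) ≤ (if (p : ℝ) < (2:ℝ) ^ (1/δ) then max 1 (2 / (δ * Real.log 2)) else 1)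
      * ((p : ℝ) ^ e) ^ δ := by
  have hp0 : (0:ℝ) ≤ (p:ℝ) := by positivity
  have hlog2 : 0 < Real.log 2 := Real.log_pos (by norm_num)
  split_ifs with h
  · -- small prime: use p ≥ 2
    have h2 : ((2:ℝ) ^ e) ^ δ ≤ ((p:ℝ) ^ e) ^ δ := by
      apply Real.rpow_le_rpow (by positivity)
      · exact pow_le_pow_left₀ (by norm_num) (by exact_mod_cast hp) e
      · exact hδ.le
    have hKpos : (0:ℝ) ≤ max 1 (2 / (δ * Real.log 2)) := le_trans zero_le_one (le_max_left _ _)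
    refine le_trans ?_ (mul_le_mul_of_nonneg_left h2 hKpos)
    -- show e+1 ≤ K * (2^e)^δ
    have hrw : ((2:ℝ) ^ e) ^ δ = Real.exp (Real.log 2 * (e * δ)) := by
      rw [← Real.rpow_natCast (2:ℝ) e, ← Real.rpow_mul (by norm_num), Real.rpow_def_of_pos (by norm_num)]

    rcases Nat.eq_zero_or_pos e with he | he
    · subst he
      simp only [Nat.cast_zero, zero_add, pow_zero, Real.one_rpow, mul_one]
      exact le_max_left _ _
    · have he1 : (1:ℝ) ≤ (e:ℝ) := by exact_mod_cast he
      have hexp : Real.log 2 * ((e:ℝ) * δ) ≤ Real.exp (Real.log 2 * ((e:ℝ) * δ)) := by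
        have := Real.add_one_le_exp (Real.log 2 * ((e:ℝ) * δ)); linarith
      have hK : 2 / (δ * Real.log 2) ≤ max 1 (2 / (δ * Real.log 2)) := le_max_right _ _
      have h1 : (e:ℝ) + 1 ≤ 2 * (e:ℝ) := by linarith
      have h3 : (2:ℝ) * e = (2 / (δ * Real.log 2)) * (Real.log 2 * ((e:ℝ) * δ)) := by
        field_simp
      rw [hrw]
      calc (e:ℝ) + 1 ≤ 2 * e := h1
        _ = (2 / (δ * Real.log 2)) * (Real.log 2 * ((e:ℝ) * δ)) := h3
        _ ≤ max 1 (2 / (δ * Real.log 2)) * Real.exp (Real.log 2 * ((e:ℝ) * δ)) := by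
            apply mul_le_mul hK hexp (by positivity) hKpos
  · -- large prime: p ≥ 2^(1/δ)
    push_neg at h
    rw [one_mul]
    have key : ((p:ℝ) ^ e) ^ δ = ((p:ℝ) ^ δ) ^ e := by
      rw [← Real.rpow_natCast (p:ℝ) e, ← Real.rpow_mul hp0, mul_comm, Real.rpow_mul hp0,
        Real.rpow_natCast]
    have h2 : (2:ℝ) ^ e ≤ ((p:ℝ) ^ δ) ^ e := by
      apply pow_le_pow_left₀ (by norm_num)
      calc (2:ℝ) = ((2:ℝ) ^ (1/δ)) ^ δ := by
            rw [← Real.rpow_mul (by norm_num), one_div_mul_cancel hδ.ne', Real.rpow_one]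
        _ ≤ (p:ℝ) ^ δ := Real.rpow_le_rpow (by positivity) h hδ.le
    rw [key]
    refine le_trans ?_ h2
    exact_mod_cast Nat.succ_le_of_lt (Nat.lt_two_pow_self (n := e))

lemma divisor_bound (δ : ℝ) (hδ : 0 < δ) :
    ∃ C : ℝ, 1 ≤ C ∧ ∀ m : ℕ, m ≠ 0 → ((m.divisors.card : ℝ)) ≤ C * (m : ℝ) ^ δ := by
  set K : ℝ := max 1 (2 / (δ * Real.log 2)) with hK
  have hK1 : 1 ≤ K := le_max_left _ _
  set B : ℕ := ⌈(2:ℝ) ^ (1/δ)⌉₊ with hB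
  refine ⟨K ^ (B + 1), one_le_pow₀ hK1, fun m hm => ?_⟩
  have hcard : (m.divisors.card : ℝ) = ∏ p ∈ m.primeFactors, ((m.factorization p : ℝ) + 1) := by
    rw [Nat.card_divisors hm]
    push_cast
    rfl
  have hmprod : (m : ℝ) = ∏ p ∈ m.primeFactors, (p : ℝ) ^ (m.factorization p) := by
    conv_lhs => rw [← Nat.factorization_prod_pow_eq_self hm]
    rw [Finsupp.prod, Nat.support_factorization]
    push_cast
    rfl
  have hrpow : (m : ℝ) ^ δ = ∏ p ∈ m.primeFactors, ((p : ℝ) ^ (m.factorization p)) ^ δ := by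
    rw [hmprod, ← Real.finset_prod_rpow _ _ (fun i _ => by positivity) δ]
  calc (m.divisors.card : ℝ)
      = ∏ p ∈ m.primeFactors, ((m.factorization p : ℝ) + 1) := hcard
    _ ≤ ∏ p ∈ m.primeFactors,
        ((if (p : ℝ) < (2:ℝ) ^ (1/δ) then K else 1) * ((p : ℝ) ^ (m.factorization p)) ^ δ) := by
        apply Finset.prod_le_prod (fun i _ => by positivity)
        intro p hp
        exact prime_factor_bound δ hδ p _ (Nat.prime_of_mem_primeFactors hp).two_le
    _ = (∏ p ∈ m.primeFactors, (if (p : ℝ) < (2:ℝ) ^ (1/δ) then K else 1)) *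
        ∏ p ∈ m.primeFactors, ((p : ℝ) ^ (m.factorization p)) ^ δ := Finset.prod_mul_distrib
    _ ≤ K ^ (B + 1) * (m : ℝ) ^ δ := by
        rw [← hrpow]
        apply mul_le_mul_of_nonneg_right _ (by positivity)
        rw [Finset.prod_ite, Finset.prod_const, Finset.prod_const, one_pow, mul_one]
        apply pow_le_pow_right₀ hK1
        calc (m.primeFactors.filter (fun p : ℕ => (p:ℝ) < (2:ℝ) ^ (1/δ))).card
            ≤ (Finset.range (B + 1)).card := by
              apply Finset.card_le_card
              intro p hp
              rw [Finset.mem_filter] at hp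
              rw [Finset.mem_range]
              have h1 : (p:ℝ) < (B:ℝ) + 1 := by
                refine lt_of_lt_of_le hp.2 (le_trans (Nat.le_ceil _) ?_)
                rw [hB]; norm_num
              exact_mod_cast h1
          _ = B + 1 := Finset.card_range _



/-- For fixed `n ≥ 2` and `ε > 0`: for every real `X ≥ 1` and every nonzero integer `α` with
`|α| ≤ X`, the number of `(n+1)`-tuples `(a₁, …, a_n, c) ∈ ℤ^{n+1}` with `a₁ ⋯ a_n = c·α^{n-1}`,
`0 < |c| ≤ X` and `0 < |aᵢ| ≤ X` for each `i`, is `≪_{n,ε} X^{1+ε}`. -/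
theorem stmt13 (n : ℕ) (hn : 2 ≤ n) (ε : ℝ) (hε : 0 < ε) :
    ∃ C : ℝ, 0 < C ∧ ∀ X : ℝ, 1 ≤ X → ∀ α : ℤ, α ≠ 0 → (|α| : ℝ) ≤ X →
      ((((Fintype.piFinset fun _ : Fin n => Finset.Icc (-⌊X⌋) ⌊X⌋) ×ˢ Finset.Icc (-⌊X⌋) ⌊X⌋).filter
          (fun q : (Fin n → ℤ) × ℤ =>
            (∀ i, q.1 i ≠ 0) ∧ q.2 ≠ 0 ∧ ∏ i, q.1 i = q.2 * α ^ (n - 1))).card : ℝ) ≤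
        C * X ^ (1 + ε) := by
  obtain ⟨m, rfl⟩ : ∃ m, n = m + 1 := ⟨n - 1, by omega⟩
  have hm1 : 1 ≤ m := by omega
  set δ : ℝ := ε / ((m + 1) * m) with hδdef
  have hδ : 0 < δ := by positivity
  obtain ⟨C₀, hC₀1, hC₀⟩ := divisor_bound δ hδ
  refine ⟨3 * (2 * C₀) ^ m, by positivity, ?_⟩
  intro X hX α hα hαX
  have hX0 : (0:ℝ) < X := lt_of_lt_of_le one_pos hX
  simp only [Nat.add_sub_cancel]
  set I : Finset ℤ := Finset.Icc (-⌊X⌋) ⌊X⌋ with hI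
  set T := ((Fintype.piFinset fun _ : Fin (m+1) => I) ×ˢ I).filter
      (fun q : (Fin (m+1) → ℤ) × ℤ =>
        (∀ i, q.1 i ≠ 0) ∧ q.2 ≠ 0 ∧ ∏ i, q.1 i = q.2 * α ^ m) with hT
  set Y : ℝ := (X ^ (m+1)) ^ δ with hY
  have hY0 : 0 ≤ Y := by positivity
  have hfib : T.card = ∑ c ∈ I, (T.filter fun q => q.2 = c).card := by
    apply Finset.card_eq_sum_card_fiberwise
    intro q hq
    rw [hT, Finset.mem_coe, Finset.mem_filter, Finset.mem_product] at hq
    exact hq.1.2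
  have key : ∀ c ∈ I, ((T.filter fun q => q.2 = c).card : ℝ) ≤ (2 * (C₀ * Y)) ^ m := by
    intro c hc
    rcases eq_or_ne c 0 with rfl | hc0
    · have : (T.filter fun q => q.2 = 0) = ∅ := by
        apply Finset.filter_false_of_mem
        intro q hq
        rw [hT, Finset.mem_filter] at hq
        exact hq.2.2.1
      rw [this]
      simp only [Finset.card_empty, Nat.cast_zero]
      positivity
    · set N : ℤ := c * α ^ m with hN
      have hNne : N ≠ 0 := mul_ne_zero hc0 (pow_ne_zero _ hα)
      set D : Finset ℤ := N.natAbs.divisors.image ((↑·) : ℕ → ℤ) ∪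
          N.natAbs.divisors.image (fun d : ℕ => -(d : ℤ)) with hD
      -- step 1 : injection
      have step1 : (T.filter fun q => q.2 = c).card ≤ D.card ^ m := by
        have := Finset.card_le_card_of_injOn
          (f := fun q : (Fin (m+1) → ℤ) × ℤ => fun i : Fin m => q.1 i.castSucc)
          (s := T.filter fun q => q.2 = c) (t := Fintype.piFinset fun _ : Fin m => D)
          ?_ ?_
        · simpa using this
        · intro q hq
          rw [Finset.mem_coe, Finset.mem_filter, hT, Finset.mem_filter] at hq
          obtain ⟨⟨-, h1, h2, h3⟩, hc2⟩ := hq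
          rw [Finset.mem_coe, Fintype.mem_piFinset]
          intro i
          have hdvd : q.1 i.castSucc ∣ N := by
            rw [hN, ← hc2, ← h3]
            exact Finset.dvd_prod_of_mem _ (Finset.mem_univ _)
          have hd : (q.1 i.castSucc).natAbs ∈ N.natAbs.divisors :=
            Nat.mem_divisors.mpr ⟨Int.natAbs_dvd_natAbs.mpr hdvd, Int.natAbs_ne_zero.mpr hNne⟩
          rcases Int.natAbs_eq (q.1 i.castSucc) with h | h
          · exact Finset.mem_union_left _ (Finset.mem_image.mpr ⟨_, hd, h.symm⟩)
          · exact Finset.mem_union_right _ (Finset.mem_image.mpr ⟨_, hd, h.symm⟩)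
        · intro q hq q' hq' hfe
          simp only [Finset.coe_filter, Set.mem_setOf_eq, hT, Finset.mem_filter] at hq hq'
          obtain ⟨⟨-, h1, h2, h3⟩, hc2⟩ := hq
          obtain ⟨⟨-, h1', h2', h3'⟩, hc2'⟩ := hq'
          have hP : ∏ i : Fin m, q.1 i.castSucc = ∏ i : Fin m, q'.1 i.castSucc :=
            Finset.prod_congr rfl (fun i _ => congrFun hfe i)
          rw [Fin.prod_univ_castSucc] at h3 h3'
          have hPne : ∏ i : Fin m, q.1 i.castSucc ≠ 0 :=
            Finset.prod_ne_zero_iff.mpr (fun i _ => h1 _)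
          have hlast : q.1 (Fin.last m) = q'.1 (Fin.last m) := by
            have heq : (∏ i : Fin m, q.1 i.castSucc) * q.1 (Fin.last m) =
                (∏ i : Fin m, q.1 i.castSucc) * q'.1 (Fin.last m) := by
              rw [h3, hc2, ← hc2', ← h3', hP]
            exact mul_left_cancel₀ hPne heq
          have hfst : q.1 = q'.1 := by
            funext i
            refine Fin.lastCases ?_ ?_ i
            · exact hlast
            · exact fun j => congrFun hfe j
          exact Prod.ext hfst (hc2.trans hc2'.symm)
      -- step 2 : D.card ≤ 2 * d(N)
      have step2 : D.card ≤ 2 * N.natAbs.divisors.card := by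
        calc D.card ≤ (N.natAbs.divisors.image ((↑·) : ℕ → ℤ)).card +
              (N.natAbs.divisors.image (fun d : ℕ => -(d : ℤ))).card := Finset.card_union_le _ _
          _ ≤ N.natAbs.divisors.card + N.natAbs.divisors.card := by
              gcongr <;> exact Finset.card_image_le
          _ = 2 * N.natAbs.divisors.card := by ring
      -- step 3 : divisor bound
      have hNabs : ((N.natAbs : ℕ) : ℝ) ≤ X ^ (m+1) := by
        have h1 : ((N.natAbs : ℕ) : ℝ) = |(c : ℝ)| * |(α : ℝ)| ^ m := by
          rw [Nat.cast_natAbs, hN]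
          push_cast
          try rw [abs_mul, abs_pow]
        rw [h1]
        have hcX : |(c : ℝ)| ≤ X := by
          rw [Finset.mem_Icc] at hc
          have := hc.1; have := hc.2
          have hfl : (⌊X⌋ : ℝ) ≤ X := Int.floor_le X
          rw [abs_le]
          constructor
          · push_cast
            calc -X ≤ -(⌊X⌋:ℝ) := by linarith
              _ ≤ (c:ℝ) := by exact_mod_cast hc.1
          · calc (c:ℝ) ≤ (⌊X⌋:ℝ) := by exact_mod_cast hc.2
              _ ≤ X := hfl
        have hαX' : |(α : ℝ)| ^ m ≤ X ^ m := by
          apply pow_le_pow_left₀ (abs_nonneg _)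
          exact_mod_cast hαX
        calc |(c : ℝ)| * |(α : ℝ)| ^ m ≤ X * X ^ m :=
              mul_le_mul hcX hαX' (by positivity) hX0.le
          _ = X ^ (m+1) := by ring
      have step3 : (N.natAbs.divisors.card : ℝ) ≤ C₀ * Y := by
        calc (N.natAbs.divisors.card : ℝ) ≤ C₀ * (N.natAbs : ℝ) ^ δ :=
              hC₀ _ (Int.natAbs_ne_zero.mpr hNne)
          _ ≤ C₀ * Y := by
              rw [hY]
              exact mul_le_mul_of_nonneg_left
                (Real.rpow_le_rpow (by positivity) hNabs hδ.le) (by linarith)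
      calc ((T.filter fun q => q.2 = c).card : ℝ) ≤ (D.card : ℝ) ^ m := by exact_mod_cast step1
        _ ≤ (2 * (N.natAbs.divisors.card : ℝ)) ^ m := by
            apply pow_le_pow_left₀ (by positivity)
            exact_mod_cast step2
        _ ≤ (2 * (C₀ * Y)) ^ m := by
            apply pow_le_pow_left₀ (by positivity)
            linarith
  -- assemble
  have hIcard : (I.card : ℝ) ≤ 3 * X := by
    have hfl1 : (1:ℤ) ≤ ⌊X⌋ := Int.le_floor.mpr (by simpa using hX)
    have hcard : I.card = (2 * ⌊X⌋ + 1).toNat := by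
      rw [hI, Int.card_Icc]; congr 1; ring
    rw [hcard]
    have hfl : (⌊X⌋ : ℝ) ≤ X := Int.floor_le X
    have h2 : (((2 * ⌊X⌋ + 1).toNat : ℕ) : ℝ) = 2 * (⌊X⌋ : ℝ) + 1 := by
      have h2' : (((2 * ⌊X⌋ + 1).toNat : ℕ) : ℤ) = 2 * ⌊X⌋ + 1 := Int.toNat_of_nonneg (by omega)
      exact_mod_cast congrArg (fun z : ℤ => (z : ℝ)) h2'
    rw [h2]
    linarith
  have hYm : Y ^ m = X ^ ε := by
    have e1 : Y = X ^ ((((m+1) : ℕ) : ℝ) * δ) := by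
      rw [hY, ← Real.rpow_natCast X (m+1), ← Real.rpow_mul hX0.le]
    rw [e1, ← Real.rpow_natCast (X ^ ((((m+1) : ℕ) : ℝ) * δ)) m, ← Real.rpow_mul hX0.le]
    congr 1
    rw [hδdef]
    have hm0 : (m:ℝ) ≠ 0 := by positivity
    have hm2 : ((m:ℝ) + 1) ≠ 0 := by positivity
    push_cast
    field_simp
  calc (T.card : ℝ) = ∑ c ∈ I, ((T.filter fun q => q.2 = c).card : ℝ) := by
        rw [hfib]; push_cast; ring
    _ ≤ ∑ _c ∈ I, (2 * (C₀ * Y)) ^ m := Finset.sum_le_sum key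
    _ = (I.card : ℝ) * (2 * (C₀ * Y)) ^ m := by rw [Finset.sum_const, nsmul_eq_mul]
    _ ≤ (3 * X) * (2 * (C₀ * Y)) ^ m := by
        apply mul_le_mul_of_nonneg_right hIcard (by positivity)
    _ = 3 * (2 * C₀) ^ m * (X * Y ^ m) := by ring
    _ = 3 * (2 * C₀) ^ m * X ^ (1 + ε) := by
        rw [hYm, Real.rpow_add hX0, Real.rpow_one]
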